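/- arXiv:2304.03675 — 7 statements merged into one kernel-verified Lean document; each statement's English description precedes it below -/
import Mathlib

section
/- Suppose X and E are Banach spaces (dim X ≥ 2), E → E are bounded linear projections P_n onto closed subspaces E_n ⊆ E with E_m ⊆ ker P_n for all m ≠ n, and there are maps φ_n : X → E_n with lim_n R(φ_n)/(2ⁿ‖P_n‖) = ∞. Then X coarsely embeds into E. -/
open scoped ENNReal NNReal

noncomputable section

/-- Compression coefficient κ(φ) = sup_{t<∞} inf_{‖x−y‖≥t} ‖φ(x)−φ(y)‖. -/
def kappaCoef {X E : Type*} [NormedAddCommGroup X] [NormedAddCommGroup E]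
    (φ : X → E) : ℝ≥0∞ :=
  ⨆ (t : ℝ) (_ : 0 ≤ t), ⨅ (x : X) (y : X) (_ : t ≤ ‖x - y‖), (‖φ x - φ y‖₊ : ℝ≥0∞)

/-- Exact compression coefficient κ̄(φ) = sup_{t<∞} inf_{‖x−y‖=t} ‖φ(x)−φ(y)‖. -/
def kappaBarCoef {X E : Type*} [NormedAddCommGroup X] [NormedAddCommGroup E]
    (φ : X → E) : ℝ≥0∞ :=
  ⨆ (t : ℝ) (_ : 0 ≤ t), ⨅ (x : X) (y : X) (_ : ‖x - y‖ = t), (‖φ x - φ y‖₊ : ℝ≥0∞)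

/-- Expansion coefficient ω(φ) = inf_{t>0} sup_{‖x−y‖≤t} ‖φ(x)−φ(y)‖. -/
def omegaCoef {X E : Type*} [NormedAddCommGroup X] [NormedAddCommGroup E]
    (φ : X → E) : ℝ≥0∞ :=
  ⨅ (t : ℝ) (_ : 0 < t), ⨆ (x : X) (y : X) (_ : ‖x - y‖ ≤ t), (‖φ x - φ y‖₊ : ℝ≥0∞)

/-- Separation ratio R(φ) = κ(φ)/ω(φ); `ENNReal` division realizes the paper's conventions. -/
def sepRatio {X E : Type*} [NormedAddCommGroup X] [NormedAddCommGroup E]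
    (φ : X → E) : ℝ≥0∞ :=
  kappaCoef φ / omegaCoef φ

/-- Exact separation ratio R̄(φ) = κ̄(φ)/ω(φ). -/
def sepRatioBar {X E : Type*} [NormedAddCommGroup X] [NormedAddCommGroup E]
    (φ : X → E) : ℝ≥0∞ :=
  kappaBarCoef φ / omegaCoef φ

/-- Compression modulus κ_φ(t). -/
def kappaMod {X E : Type*} [NormedAddCommGroup X] [NormedAddCommGroup E]
    (φ : X → E) (t : ℝ) : ℝ≥0∞ :=
  ⨅ (x : X) (y : X) (_ : t ≤ ‖x - y‖), (‖φ x - φ y‖₊ : ℝ≥0∞)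

/-- Exact compression modulus κ̄_φ(t). -/
def kappaBarMod {X E : Type*} [NormedAddCommGroup X] [NormedAddCommGroup E]
    (φ : X → E) (t : ℝ) : ℝ≥0∞ :=
  ⨅ (x : X) (y : X) (_ : ‖x - y‖ = t), (‖φ x - φ y‖₊ : ℝ≥0∞)

/-- Exact expansion modulus ω̄_φ(t). -/
def omegaBarMod {X E : Type*} [NormedAddCommGroup X] [NormedAddCommGroup E]
    (φ : X → E) (t : ℝ) : ℝ≥0∞ :=
  ⨆ (x : X) (y : X) (_ : ‖x - y‖ = t), (‖φ x - φ y‖₊ : ℝ≥0∞)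

/-- Expansion modulus ω_φ(t). -/
def omegaMod {X E : Type*} [NormedAddCommGroup X] [NormedAddCommGroup E]
    (φ : X → E) (t : ℝ) : ℝ≥0∞ :=
  ⨆ (x : X) (y : X) (_ : ‖x - y‖ ≤ t), (‖φ x - φ y‖₊ : ℝ≥0∞)

/-- Coarse embedding: ρ₁(‖x−y‖) ≤ ‖ψ(x)−ψ(y)‖ ≤ ρ₂(‖x−y‖) with ρ₁ → ∞. -/
def CoarseEmbedding {X E : Type*} [NormedAddCommGroup X] [NormedAddCommGroup E]
    (ψ : X → E) : Prop :=
  ∃ ρ₁ ρ₂ : ℝ → ℝ, Filter.Tendsto ρ₁ Filter.atTop Filter.atTop ∧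
    ∀ x y : X, ρ₁ ‖x - y‖ ≤ ‖ψ x - ψ y‖ ∧ ‖ψ x - ψ y‖ ≤ ρ₂ ‖x - y‖

/-- Solvent map. -/
def Solvent {X E : Type*} [NormedAddCommGroup X] [NormedAddCommGroup E]
    (φ : X → E) : Prop :=
  ∃ R : ℕ → ℝ, ∀ n : ℕ, 1 ≤ n → ∀ x y : X,
    R n ≤ ‖x - y‖ → ‖x - y‖ ≤ R n + n → (n : ℝ) ≤ ‖φ x - φ y‖

/-- Lipschitz for large distances. -/
def LipschitzLarge {X E : Type*} [NormedAddCommGroup X] [NormedAddCommGroup E]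
    (φ : X → E) : Prop :=
  ∃ K : ℝ, ∀ x y : X, ‖φ x - φ y‖ ≤ K * ‖x - y‖ + K

end


/-!
Along a subsequence `n k`, the ratio `R(φ n)` beats `2ᵏ (k + 1) ‖P n‖`. Rescaling the domain
and the range of `φ (n k)` then yields a map `θ k` into `E (n k)` that moves points at distance
`d` by at most `2⁻ᵏ (d + 1)` (chain steps of length at most the scale where `ω` is attained)
but moves far-apart points by at least `(k + 1) ‖P (n k)‖` (the scale where `κ` is attained).
The sum `ψ = ∑ θ k` is coarsely Lipschitz by the geometric bound, and `P (n k)` sends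
`ψ x - ψ y` back to `θ k x - θ k y`, the other summands lying in its kernel; hence
`‖ψ x - ψ y‖ ≥ k + 1` once `x` and `y` are far apart.
-/

open Filter Topology

theorem norm_sub_le_of_forall_norm_sub_le_one {X E : Type*} [SeminormedAddCommGroup X]
    [NormedSpace ℝ X] [SeminormedAddCommGroup E] {f : X → E} {W : ℝ} (hW : 0 ≤ W)
    (h : ∀ x y, ‖x - y‖ ≤ 1 → ‖f x - f y‖ ≤ W) (x y : X) :
    ‖f x - f y‖ ≤ (‖x - y‖ + 1) * W := by
  set n := ⌊‖x - y‖⌋₊ + 1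
  have hn : (0 : ℝ) < n := by positivity
  have hlt : ‖x - y‖ < n := by simpa [n] using Nat.lt_floor_add_one ‖x - y‖
  have hle : (n : ℝ) ≤ ‖x - y‖ + 1 := by
    simpa [n] using Nat.floor_le (norm_nonneg (x - y))
  let p : ℕ → X := fun i => x + ((i : ℝ) / n) • (y - x)
  have hstep : ∀ i, ‖f (p i) - f (p (i + 1))‖ ≤ W := fun i => h _ _ <| by
    have : p i - p (i + 1) = (1 / (n : ℝ)) • (x - y) := by
      simp only [p]; push_cast; module
    rw [this, norm_smul, Real.norm_of_nonneg (by positivity), one_div_mul_eq_div,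
      div_le_one hn]
    exact hlt.le
  calc ‖f x - f y‖ = dist (f (p 0)) (f (p n)) := by
        simp [p, dist_eq_norm, hn.ne']
    _ ≤ ∑ i ∈ Finset.range n, dist (f (p i)) (f (p (i + 1))) :=
        dist_le_range_sum_dist (f ∘ p) n
    _ ≤ ∑ _i ∈ Finset.range n, W :=
        Finset.sum_le_sum fun i _ => (dist_eq_norm _ _).trans_le (hstep i)
    _ = n * W := by simp
    _ ≤ (‖x - y‖ + 1) * W := mul_le_mul_of_nonneg_right hle hW

section Coefficients

variable {X E : Type*} [NormedAddCommGroup X] [NormedAddCommGroup E]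

theorem exists_forall_norm_sub_lt_of_omegaCoef_lt {φ : X → E} {W : ℝ}
    (h : omegaCoef φ < ENNReal.ofReal W) :
    ∃ t₀ > 0, ∀ x y : X, ‖x - y‖ ≤ t₀ → ‖φ x - φ y‖ < W := by
  simp only [omegaCoef, iInf_lt_iff] at h
  obtain ⟨t₀, ht₀, h⟩ := h
  refine ⟨t₀, ht₀, fun x y hxy => (ENNReal.ofReal_lt_ofReal_iff'.1 ?_).1⟩
  rw [ofReal_norm, enorm_eq_nnnorm]
  exact (le_iSup₂_of_le x y (le_iSup (fun _ : ‖x - y‖ ≤ t₀ => _) hxy)).trans_lt h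

theorem exists_forall_lt_norm_sub_of_lt_kappaCoef {φ : X → E} {m : ℝ}
    (h : ENNReal.ofReal m < kappaCoef φ) :
    ∃ T, ∀ x y : X, T ≤ ‖x - y‖ → m < ‖φ x - φ y‖ := by
  simp only [kappaCoef, lt_iSup_iff] at h
  obtain ⟨T, -, h⟩ := h
  refine ⟨T, fun x y hxy => (ENNReal.ofReal_lt_ofReal_iff'.1 ?_).1⟩
  rw [ofReal_norm, enorm_eq_nnnorm]
  exact h.trans_le (iInf₂_le_of_le x y (iInf_le_of_le hxy le_rfl))

theorem exists_scales_of_lt_sepRatio {φ : X → E} {C : ℝ} (hC : 0 < C)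
    (h : ENNReal.ofReal C < sepRatio φ) :
    ∃ W > 0, (∃ t₀ > 0, ∀ x y : X, ‖x - y‖ ≤ t₀ → ‖φ x - φ y‖ ≤ W) ∧
      ∃ T, ∀ x y : X, T ≤ ‖x - y‖ → C * W ≤ ‖φ x - φ y‖ := by
  have hC₀ : ENNReal.ofReal C ≠ 0 := (ENNReal.ofReal_pos.2 hC).ne'
  have hωκ : omegaCoef φ < kappaCoef φ / ENNReal.ofReal C := by
    rw [sepRatio, ENNReal.lt_div_iff_mul_lt (.inr ENNReal.ofReal_ne_top) (.inr hC₀)] at h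
    rwa [ENNReal.lt_div_iff_mul_lt (.inl hC₀) (.inl ENNReal.ofReal_ne_top), mul_comm]
  obtain ⟨w, hωw, hwκ⟩ := exists_between hωκ
  have hw : w ≠ ⊤ := hwκ.ne_top
  rw [ENNReal.lt_div_iff_mul_lt (.inl hC₀) (.inl ENNReal.ofReal_ne_top)] at hwκ
  refine ⟨w.toReal, ENNReal.toReal_pos (pos_of_gt hωw).ne' hw, ?_, ?_⟩
  · obtain ⟨t₀, ht₀, hsmall⟩ := exists_forall_norm_sub_lt_of_omegaCoef_lt (W := w.toReal)
      (by rwa [ENNReal.ofReal_toReal hw])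
    exact ⟨t₀, ht₀, fun x y hxy => (hsmall x y hxy).le⟩
  · obtain ⟨T, hlarge⟩ := exists_forall_lt_norm_sub_of_lt_kappaCoef (φ := φ) (m := C * w.toReal)
      (by rwa [ENNReal.ofReal_mul hC.le, ENNReal.ofReal_toReal hw, mul_comm])
    exact ⟨T, fun x y hxy => (hlarge x y hxy).le⟩

theorem kappaCoef_const [NormedSpace ℝ X] [Nontrivial X] (c : E) :
    kappaCoef (fun _ : X => c) = 0 := by
  refine le_antisymm (iSup₂_le fun t ht => ?_) zero_le
  obtain ⟨v, hv⟩ := exists_norm_eq X ht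
  exact iInf₂_le_of_le v 0 (iInf_le_of_le (by simp [hv]) (by simp))

theorem sepRatio_const [NormedSpace ℝ X] [Nontrivial X] (c : E) :
    sepRatio (fun _ : X => c) = 0 := by
  rw [sepRatio, kappaCoef_const, ENNReal.zero_div]

end Coefficients

theorem exists_rescale_of_lt_sepRatio {X E : Type*} [NormedAddCommGroup X] [NormedSpace ℝ X]
    [NormedAddCommGroup E] [NormedSpace ℝ E] {φ : X → E} {S : Submodule ℝ E}
    (hφS : ∀ x, φ x ∈ S) {ε C : ℝ} (hε : 0 < ε) (hC : 0 < C)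
    (h : ENNReal.ofReal C < sepRatio φ) :
    ∃ θ : X → E, (∀ x, θ x ∈ S) ∧ θ 0 = 0 ∧
      (∀ x y, ‖θ x - θ y‖ ≤ ε * (‖x - y‖ + 1)) ∧
      ∃ R, ∀ x y, R ≤ ‖x - y‖ → ε * C ≤ ‖θ x - θ y‖ := by
  obtain ⟨W, hW, ⟨t₀, ht₀, hsmall⟩, T, hlarge⟩ := exists_scales_of_lt_sepRatio hC h
  have hscale : ∀ x y : X, ‖t₀ • x - t₀ • y‖ = t₀ * ‖x - y‖ := fun x y => by
    rw [← smul_sub, norm_smul, Real.norm_of_nonneg ht₀.le]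
  let θ : X → E := fun x => (ε / W) • (φ (t₀ • x) - φ 0)
  have hθ : ∀ x y, ‖θ x - θ y‖ = ε / W * ‖φ (t₀ • x) - φ (t₀ • y)‖ := fun x y => by
    simp only [θ, ← smul_sub, sub_sub_sub_cancel_right, norm_smul,
      Real.norm_of_nonneg (div_pos hε hW).le]
  refine ⟨θ, fun x => S.smul_mem _ (S.sub_mem (hφS _) (hφS _)), by simp [θ], fun x y => ?_,
    T / t₀, fun x y hxy => ?_⟩
  · have hlip := norm_sub_le_of_forall_norm_sub_le_one (f := fun x => φ (t₀ • x)) hW.le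
      (fun x y hxy => hsmall _ _ <| by rw [hscale]; exact mul_le_of_le_one_right ht₀.le hxy) x y
    calc ‖θ x - θ y‖ ≤ ε / W * ((‖x - y‖ + 1) * W) := by
          rw [hθ]; gcongr
      _ = ε * (‖x - y‖ + 1) := by field_simp
  · rw [div_le_iff₀ ht₀, mul_comm, ← hscale] at hxy
    calc ε * C = ε / W * (C * W) := by field_simp
      _ ≤ ‖θ x - θ y‖ := by rw [hθ]; gcongr; exact hlarge _ _ hxy

theorem ContinuousLinearMap.norm_pos_of_sepRatio_ne_zero {X E : Type*} [NormedAddCommGroup X]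
    [NormedSpace ℝ X] [Nontrivial X] [NormedAddCommGroup E] [NormedSpace ℝ E] {P : E →L[ℝ] E}
    {φ : X → E} (hφ : ∀ x, φ x ∈ LinearMap.range (P : E →ₗ[ℝ] E)) (h : sepRatio φ ≠ 0) :
    0 < ‖P‖ := by
  refine norm_pos_iff.2 fun hP => h ?_
  have : φ = fun _ => 0 := funext fun x => by
    obtain ⟨u, hu⟩ := hφ x
    rw [← hu, hP]
    rfl
  rw [this, sepRatio_const]

theorem eventually_ofReal_mul_lt_of_tendsto_top {a : ℕ → ℝ≥0∞} {b : ℕ → ℝ}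
    (h : Tendsto (fun n => a n / (2 ^ n * ENNReal.ofReal (b n))) atTop (𝓝 ⊤))
    {c : ℝ} (hc : 0 < c) :
    ∀ᶠ n in atTop, ENNReal.ofReal (c * b n) < a n := by
  filter_upwards [ENNReal.tendsto_nhds_top_iff_nnreal.1 h c.toNNReal] with n hn
  rw [ENNReal.lt_div_iff_mul_lt (.inr ENNReal.coe_ne_top) (.inr (by simpa using hc))] at hn
  calc ENNReal.ofReal (c * b n) = ENNReal.ofReal c * ENNReal.ofReal (b n) :=
        ENNReal.ofReal_mul hc.le
    _ ≤ ENNReal.ofReal c * (2 ^ n * ENNReal.ofReal (b n)) := by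
        gcongr; exact le_mul_of_one_le_left' (one_le_pow₀ one_le_two)
    _ < a n := hn

theorem coarseEmbedding_of_forall_exists_le {X E : Type*} [NormedAddCommGroup X]
    [NormedSpace ℝ X] [Nontrivial X] [NormedAddCommGroup E] {ψ : X → E} (ρ₂ : ℝ → ℝ)
    (hup : ∀ x y, ‖ψ x - ψ y‖ ≤ ρ₂ ‖x - y‖)
    (hlow : ∀ j : ℕ, ∃ R, ∀ x y, R ≤ ‖x - y‖ → (j : ℝ) ≤ ‖ψ x - ψ y‖) :
    CoarseEmbedding ψ := by
  refine ⟨fun t => ⨅ p : {p : X × X // t ≤ ‖p.1 - p.2‖}, ‖ψ p.1.1 - ψ p.1.2‖, ρ₂, ?_,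
    fun x y => ⟨ciInf_le ⟨0, ?_⟩ (⟨(x, y), le_rfl⟩ : {p : X × X // ‖x - y‖ ≤ ‖p.1 - p.2‖}),
      hup x y⟩⟩
  · refine tendsto_atTop.2 fun b => ?_
    obtain ⟨R, hR⟩ := hlow ⌈b⌉₊
    filter_upwards [eventually_ge_atTop (max R 0)] with t ht
    obtain ⟨v, hv⟩ := exists_norm_eq X ((le_max_right R 0).trans ht)
    have : Nonempty {p : X × X // t ≤ ‖p.1 - p.2‖} := ⟨⟨(v, 0), by simp [hv]⟩⟩
    exact le_ciInf fun p =>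
      (Nat.le_ceil b).trans (hR _ _ (((le_max_left R 0).trans ht).trans p.2))
  · rintro _ ⟨p, rfl⟩
    exact norm_nonneg _

theorem ContinuousLinearMap.map_tsum_eq_of_mem {ι E : Type*} [NormedAddCommGroup E]
    [NormedSpace ℝ E] {Q : E →L[ℝ] E} {F : ι → Submodule ℝ E} {v : ι → E} (hv : Summable v)
    (hvF : ∀ k, v k ∈ F k) {j : ι} (hid : ∀ u ∈ F j, Q u = u)
    (hker : ∀ k, k ≠ j → F k ≤ LinearMap.ker (Q : E →ₗ[ℝ] E)) :
    Q (∑' k, v k) = v j := by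
  rw [Q.map_tsum hv, tsum_eq_single (f := fun k => Q (v k)) j fun k hk => hker k hk (hvF k),
    hid _ (hvF j)]

theorem coarseEmbedding_tsum {X E : Type*} [NormedAddCommGroup X] [NormedSpace ℝ X]
    [Nontrivial X] [NormedAddCommGroup E] [NormedSpace ℝ E] [CompleteSpace E]
    {Q : ℕ → E →L[ℝ] E} {F : ℕ → Submodule ℝ E} (hQid : ∀ k, ∀ u ∈ F k, Q k u = u)
    (hQker : ∀ j k, j ≠ k → F j ≤ LinearMap.ker (Q k : E →ₗ[ℝ] E)) (hQ : ∀ k, 0 < ‖Q k‖)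
    {θ : ℕ → X → E} (hθF : ∀ k x, θ k x ∈ F k) (hθ0 : ∀ k, θ k 0 = 0)
    (hθ : ∀ k x y, ‖θ k x - θ k y‖ ≤ (1 / 2) ^ k * (‖x - y‖ + 1))
    (hθlow : ∀ k : ℕ, ∃ R, ∀ x y, R ≤ ‖x - y‖ → (k + 1) * ‖Q k‖ ≤ ‖θ k x - θ k y‖) :
    CoarseEmbedding fun x => ∑' k, θ k x := by
  have hsum : ∀ x, Summable fun k => θ k x := fun x =>
    .of_norm_bounded (summable_geometric_two.mul_right (‖x‖ + 1)) fun k => by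
      simpa [hθ0] using hθ k x 0
  have hdiff : ∀ x y, ∑' k, θ k x - ∑' k, θ k y = ∑' k, (θ k x - θ k y) := fun x y =>
    ((hsum x).tsum_sub (hsum y)).symm
  refine coarseEmbedding_of_forall_exists_le (fun t => 2 * (t + 1)) (fun x y => ?_) fun j => ?_
  · rw [hdiff]
    exact tsum_of_norm_bounded (hasSum_geometric_two.mul_right _) (hθ · x y)
  · obtain ⟨R, hR⟩ := hθlow j
    refine ⟨R, fun x y hxy => ?_⟩
    have hproj : Q j (∑' k, θ k x - ∑' k, θ k y) = θ j x - θ j y := by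
      rw [hdiff]
      exact (Q j).map_tsum_eq_of_mem ((hsum x).sub (hsum y))
        (fun k => (F k).sub_mem (hθF k x) (hθF k y)) (hQid j) fun k hk => hQker k j hk
    have hQnorm := (Q j).le_opNorm (∑' k, θ k x - ∑' k, θ k y)
    rw [hproj] at hQnorm
    have hj : (j + 1 : ℝ) ≤ ‖∑' k, θ k x - ∑' k, θ k y‖ :=
      le_of_mul_le_mul_left ((mul_comm _ _).trans_le ((hR x y hxy).trans hQnorm)) (hQ j)
    linarith

theorem coarse_embedding_from_projections_general {X E : Type*}
    [NormedAddCommGroup X] [NormedSpace ℝ X]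
    [NormedAddCommGroup E] [NormedSpace ℝ E] [CompleteSpace E]
    (hX : 2 ≤ Module.rank ℝ X)
    (P : ℕ → E →L[ℝ] E) (En : ℕ → Submodule ℝ E)
    (hidem : ∀ n, ∀ v : E, P n (P n v) = P n v)
    (hrange : ∀ n, LinearMap.range (P n : E →ₗ[ℝ] E) = En n)
    (hker : ∀ m n, m ≠ n → En m ≤ LinearMap.ker (P n : E →ₗ[ℝ] E))
    (φ : ℕ → X → E) (hφmem : ∀ n x, φ n x ∈ En n)
    (hlim : Filter.Tendsto
      (fun n => sepRatio (φ n) / ((2 : ℝ≥0∞) ^ n * ENNReal.ofReal ‖P n‖))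
      Filter.atTop (nhds ⊤)) :
    ∃ ψ : X → E, CoarseEmbedding ψ := by
  have : Nontrivial X := rank_pos_iff_nontrivial.1 (lt_of_lt_of_le (by norm_num) hX)
  have hev : ∀ k : ℕ, ∀ᶠ m in atTop,
      ENNReal.ofReal (2 ^ k * ((k + 1) * ‖P m‖)) < sepRatio (φ m) := fun k => by
    simpa only [mul_assoc] using
      eventually_ofReal_mul_lt_of_tendsto_top hlim (c := 2 ^ k * (k + 1)) (by positivity)
  obtain ⟨n, hn, hsep⟩ := extraction_forall_of_eventually hev
  have hP : ∀ k, 0 < ‖P (n k)‖ := fun k =>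
    (P (n k)).norm_pos_of_sepRatio_ne_zero (fun x => hrange (n k) ▸ hφmem (n k) x)
      (pos_of_gt (hsep k)).ne'
  choose θ hθF hθ0 hθ hθlow using fun k =>
    exists_rescale_of_lt_sepRatio (hφmem (n k)) (ε := (1 / 2) ^ k) (by positivity)
      (by have := hP k; positivity) (hsep k)
  refine ⟨_, coarseEmbedding_tsum (Q := fun k => P (n k)) (fun k u hu => ?_)
    (fun j k hjk => hker _ _ (hn.injective.ne hjk)) hP hθF hθ0 hθ fun k => ?_⟩
  · obtain ⟨v, rfl⟩ := (hrange (n k)).symm ▸ hu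
    exact hidem (n k) v
  · simpa only [← mul_assoc, ← mul_pow, one_div, inv_mul_cancel₀ (two_ne_zero' ℝ), one_pow,
      one_mul] using hθlow k

theorem coarse_embedding_from_projections {X E : Type*}
    [NormedAddCommGroup X] [NormedSpace ℝ X] [CompleteSpace X]
    [NormedAddCommGroup E] [NormedSpace ℝ E] [CompleteSpace E]
    (hX : 2 ≤ Module.rank ℝ X)
    (P : ℕ → E →L[ℝ] E) (En : ℕ → Submodule ℝ E)
    (hidem : ∀ n, ∀ v : E, P n (P n v) = P n v)
    (hrange : ∀ n, LinearMap.range (P n : E →ₗ[ℝ] E) = En n)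
    (hker : ∀ m n, m ≠ n → En m ≤ LinearMap.ker (P n : E →ₗ[ℝ] E))
    (φ : ℕ → X → E) (hφmem : ∀ n x, φ n x ∈ En n)
    (hlim : Filter.Tendsto
      (fun n => sepRatio (φ n) / ((2 : ℝ≥0∞) ^ n * ENNReal.ofReal ‖P n‖))
      Filter.atTop (nhds ⊤)) :
    ∃ ψ : X → E, CoarseEmbedding ψ :=
  coarse_embedding_from_projections_general hX P En hidem hrange hker φ hφmem hlim
end

section
/- Suppose X and E are Banach spaces (dim X ≥ 2) with sup_φ R̄(φ) = ∞, where the supremum ranges over all maps φ : X → E and R̄(φ) = κ̄(φ)/ω(φ) is the exact separation ratio. Then there is a map ψ : X → ℓ₂(E) that is Lipschitz for large distances and solvent. -/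
open scoped ENNReal NNReal

instance : Fact ((1 : ℝ≥0∞) ≤ 2) := ⟨one_le_two⟩

/-! Since `R̄` is unbounded, for each `n` some `φ` sends all pairs at one distance `t` at least
`M ε` apart while moving pairs at distance `≤ Δ` by at most `ε`, where `M = n 2ⁿ + 1`.
Chaining along segments, `φ` moves any pair by at most `ε (‖x - y‖ / Δ + 1)`, and pairs at
distance in `[t, t + Δ]` by at least `(M - 1) ε`. Rescaling the domain by `Δ / (n + 1)` and the
values by `2⁻ⁿ / ε` gives `gₙ` with `‖gₙ x - gₙ y‖ ≤ 2⁻ⁿ (‖x - y‖ + 1)` and `‖gₙ x - gₙ y‖ ≥ n` on a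
window of length `n`; since `(2⁻ⁿ)` is square-summable, `ψ = (gₙ)ₙ` maps into `ℓ₂(E)`. -/

section Segments

variable {X Y : Type*} [SeminormedAddCommGroup X] [NormedSpace ℝ X] [PseudoMetricSpace Y]
  {f : X → Y} {Δ ε : ℝ}

theorem dist_le_of_forall_dist_le (hΔ : 0 < Δ)
    (hf : ∀ x y, dist x y ≤ Δ → dist (f x) (f y) ≤ ε) (x y : X) :
    dist (f x) (f y) ≤ ε * (dist x y / Δ + 1) := by
  set k := ⌊dist x y / Δ⌋₊ + 1
  have hk : (0 : ℝ) < k := by positivity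
  have hε : 0 ≤ ε := dist_self (f x) ▸ hf x x (by simpa using hΔ.le)
  let p : ℕ → X := fun i => AffineMap.lineMap x y ((i : ℝ) / k)
  have hstep : ∀ i, dist (p i) (p (i + 1)) ≤ Δ := fun i => by
    have : dist x y / Δ < k := by simpa [k] using Nat.lt_floor_add_one (dist x y / Δ)
    rw [div_lt_iff₀ hΔ] at this
    simp only [p, dist_lineMap_lineMap, Real.dist_eq]
    rw [show (i : ℝ) / k - ((i + 1 : ℕ) : ℝ) / k = -(1 / k) by push_cast; ring, abs_neg,
      abs_of_pos (by positivity), one_div_mul_eq_div, div_le_iff₀ hk]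
    linarith
  calc dist (f x) (f y) = dist (f (p 0)) (f (p k)) := by simp [p, hk.ne']
    _ ≤ ∑ i ∈ Finset.range k, dist (f (p i)) (f (p (i + 1))) :=
      dist_le_range_sum_dist (fun i => f (p i)) k
    _ ≤ ∑ _i ∈ Finset.range k, ε := Finset.sum_le_sum fun i _ => hf _ _ (hstep i)
    _ = k * ε := by simp
    _ ≤ (dist x y / Δ + 1) * ε := by
      gcongr
      simpa [k] using Nat.floor_le (div_nonneg dist_nonneg hΔ.le)
    _ = ε * (dist x y / Δ + 1) := mul_comm _ _

theorem sub_le_dist_of_dist_mem_Icc {t δ : ℝ} (ht : 0 < t)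
    (hsep : ∀ x y, dist x y = t → δ ≤ dist (f x) (f y))
    (hf : ∀ x y, dist x y ≤ Δ → dist (f x) (f y) ≤ ε) {x y : X}
    (hxy : dist x y ∈ Set.Icc t (t + Δ)) : δ - ε ≤ dist (f x) (f y) := by
  obtain ⟨h₁, h₂⟩ := hxy
  have hd : 0 < dist x y := ht.trans_le h₁
  set z := AffineMap.lineMap x y (t / dist x y)
  have hxz : dist x z = t := by
    rw [dist_left_lineMap, Real.norm_of_nonneg (by positivity), div_mul_cancel₀ _ hd.ne']
  have hzy : dist z y ≤ Δ := by
    rw [dist_lineMap_right, Real.norm_of_nonneg (by rw [sub_nonneg, div_le_one hd]; exact h₁),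
      sub_mul, div_mul_cancel₀ _ hd.ne']
    linarith
  linarith [hsep x z hxz, hf z y hzy, dist_triangle (f x) (f y) (f z), dist_comm (f y) (f z)]

end Segments

theorem exists_scales_of_ofReal_lt_sepRatioBar {X E : Type*} [NormedAddCommGroup X]
    [NormedAddCommGroup E] {φ : X → E} {M : ℝ} (hM : 0 < M)
    (h : ENNReal.ofReal M < sepRatioBar φ) :
    ∃ t Δ ε : ℝ, 0 < t ∧ 0 < Δ ∧ 0 < ε ∧
      (∀ x y : X, ‖x - y‖ = t → M * ε ≤ ‖φ x - φ y‖) ∧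
      (∀ x y : X, ‖x - y‖ ≤ Δ → ‖φ x - φ y‖ ≤ ε) := by
  have hM0 : ENNReal.ofReal M ≠ 0 := (ENNReal.ofReal_pos.2 hM).ne'
  have hω : omegaCoef φ < kappaBarCoef φ / ENNReal.ofReal M := by
    rw [ENNReal.lt_div_iff_mul_lt (.inl hM0) (.inl ENNReal.ofReal_ne_top)]
    exact ENNReal.mul_lt_of_lt_div' h
  obtain ⟨ε, -, hωε, hεκ⟩ := ENNReal.lt_iff_exists_real_btwn.1 hω
  have hε : 0 < ε := ENNReal.ofReal_pos.1 (hωε.trans_le' zero_le)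
  have hκ := ENNReal.mul_lt_of_lt_div' hεκ
  rw [← ENNReal.ofReal_mul hM.le] at hκ
  simp only [kappaBarCoef, lt_iSup_iff] at hκ
  simp only [omegaCoef, iInf_lt_iff] at hωε
  obtain ⟨t, ht, hκt⟩ := hκ
  obtain ⟨Δ, hΔ, hωΔ⟩ := hωε
  have hnorm (a : E) : (‖a‖₊ : ℝ≥0∞) = ENNReal.ofReal ‖a‖ := (ofReal_norm a).symm
  have hsep (x y : X) (hxy : ‖x - y‖ = t) : M * ε ≤ ‖φ x - φ y‖ := by
    have := hκt.le.trans (iInf_le_of_le x (iInf_le_of_le y (iInf_le _ hxy)))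
    rwa [hnorm, ENNReal.ofReal_le_ofReal_iff (norm_nonneg _)] at this
  have hsmall (x y : X) (hxy : ‖x - y‖ ≤ Δ) : ‖φ x - φ y‖ ≤ ε := by
    have := (le_iSup₂_of_le x y (le_iSup_of_le hxy le_rfl)).trans hωΔ.le
    rwa [hnorm, ENNReal.ofReal_le_ofReal_iff hε.le] at this
  refine ⟨t, Δ, ε, ht.lt_of_ne fun h0 => ?_, hΔ, hε, hsep, hsmall⟩
  exact (mul_pos hM hε).not_ge (by simpa using hsep 0 0 (by simp [h0]))

theorem exists_rescaling_of_ofReal_lt_sepRatioBar {X E : Type*} [NormedAddCommGroup X]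
    [NormedSpace ℝ X] [NormedAddCommGroup E] [NormedSpace ℝ E] {φ : X → E} {a b L : ℝ}
    (ha : 0 < a) (hb : 0 ≤ b) (hL : 0 ≤ L) (h : ENNReal.ofReal (b / a + 1) < sepRatioBar φ) :
    ∃ g : X → E, g 0 = 0 ∧ (∀ x y, ‖g x - g y‖ ≤ a * (‖x - y‖ + 1)) ∧
      ∃ R : ℝ, ∀ x y, R ≤ ‖x - y‖ → ‖x - y‖ ≤ R + L → b ≤ ‖g x - g y‖ := by
  obtain ⟨t, Δ, ε, ht, hΔ, hε, hsep, hsmall⟩ :=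
    exists_scales_of_ofReal_lt_sepRatioBar (by positivity) h
  simp only [← dist_eq_norm] at hsep hsmall ⊢
  set μ := Δ / (L + 1)
  have hμ : 0 < μ := by positivity
  refine ⟨fun x => (a / ε) • (φ (μ • x) - φ 0), by simp, ?_, t / μ, ?_⟩
  all_goals
    intro x y
    rw [dist_smul₀, dist_sub_right, Real.norm_of_nonneg (by positivity)]
    have hdist : dist (μ • x) (μ • y) = μ * dist x y := by
      rw [dist_smul₀, Real.norm_of_nonneg hμ.le]
  · have hμΔ : μ / Δ ≤ 1 := by
      rw [div_le_one hΔ]; exact div_le_self hΔ.le (by linarith)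
    calc a / ε * dist (φ (μ • x)) (φ (μ • y))
        ≤ a / ε * (ε * (μ * dist x y / Δ + 1)) := by
          gcongr; rw [← hdist]; exact dist_le_of_forall_dist_le hΔ hsmall _ _
      _ = a * (μ / Δ * dist x y + 1) := by field_simp
      _ ≤ a * (dist x y + 1) := by gcongr; nlinarith [dist_nonneg (x := x) (y := y)]
  · intro h₁ h₂
    have hlow := sub_le_dist_of_dist_mem_Icc ht hsep hsmall (x := μ • x) (y := μ • y)
      ⟨by rw [hdist, mul_comm]; exact (div_le_iff₀ hμ).1 h₁, by rw [hdist]; calc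
        μ * dist x y ≤ μ * (t / μ + L) := by gcongr
        _ = t + μ * L := by field_simp
        _ ≤ t + μ * (L + 1) := by gcongr; linarith
        _ = t + Δ := by rw [div_mul_cancel₀ _ (by positivity)]⟩
    calc b = a / ε * ((b / a + 1) * ε - ε) := by field_simp; ring
      _ ≤ a / ε * dist (φ (μ • x)) (φ (μ • y)) := by gcongr

theorem memℓp_geometric {r : ℝ} (hr₀ : 0 ≤ r) (hr₁ : r < 1) {p : ℝ≥0∞} (hp : 1 ≤ p) :
    Memℓp (fun n : ℕ => r ^ n) p := by
  refine Memℓp.of_exponent_ge (memℓp_gen ?_) hp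
  simpa [abs_of_nonneg hr₀] using summable_geometric_of_lt_one hr₀ hr₁

theorem exists_lipschitzLarge_lp_of_norm_sub_le {X E ι : Type*} [NormedAddCommGroup X]
    [NormedAddCommGroup E] {p : ℝ≥0∞} [Fact (1 ≤ p)] (g : ι → X → E) (w : lp (fun _ : ι => ℝ) p)
    (hg₀ : ∀ i, g i 0 = 0) (hg : ∀ i x y, ‖g i x - g i y‖ ≤ w i * (‖x - y‖ + 1)) :
    ∃ ψ : X → lp (fun _ : ι => E) p, (∀ x i, ψ x i = g i x) ∧ LipschitzLarge ψ := by
  have hmem (x : X) : Memℓp (fun i => g i x) p :=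
    (w.2.const_mul (‖x‖ + 1)).mono fun i => by
      simpa [hg₀, mul_comm] using hg i x 0
  refine ⟨fun x => ⟨fun i => g i x, hmem x⟩, fun _ _ => rfl, ‖w‖, fun x y => ?_⟩
  calc ‖(⟨fun i => g i x, hmem x⟩ - ⟨fun i => g i y, hmem y⟩ : lp (fun _ : ι => E) p)‖
      ≤ ‖(‖x - y‖ + 1) • w‖ :=
        lp.norm_mono (zero_lt_one.trans_le Fact.out).ne' fun i =>
          (hg i x y).trans (by simpa [mul_comm] using le_abs_self ((‖x - y‖ + 1) * w i))
    _ = ‖w‖ * ‖x - y‖ + ‖w‖ := by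
      rw [norm_smul, Real.norm_of_nonneg (by positivity)]; ring

theorem lipschitz_solvent_into_lp_general {X E : Type*}
    [NormedAddCommGroup X] [NormedSpace ℝ X]
    [NormedAddCommGroup E] [NormedSpace ℝ E]
    (hsup : (⨆ φ : X → E, sepRatioBar φ) = ⊤) :
    ∃ ψ : X → lp (fun _ : ℕ => E) 2, LipschitzLarge ψ ∧ Solvent ψ := by
  have hcoord (n : ℕ) : ∃ g : X → E, g 0 = 0 ∧
      (∀ x y, ‖g x - g y‖ ≤ (1 / 2) ^ n * (‖x - y‖ + 1)) ∧
      ∃ R : ℝ, ∀ x y, R ≤ ‖x - y‖ → ‖x - y‖ ≤ R + n → (n : ℝ) ≤ ‖g x - g y‖ := by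
    obtain ⟨φ, hφ⟩ := lt_iSup_iff.1 (hsup ▸ ENNReal.ofReal_lt_top :
      ENNReal.ofReal (n / (1 / 2) ^ n + 1) < ⨆ φ : X → E, sepRatioBar φ)
    exact exists_rescaling_of_ofReal_lt_sepRatioBar (by positivity) n.cast_nonneg
      n.cast_nonneg hφ
  choose g hg₀ hg R hR using hcoord
  obtain ⟨ψ, hψ, hlip⟩ := exists_lipschitzLarge_lp_of_norm_sub_le g
    ⟨_, memℓp_geometric (r := 1 / 2) (by norm_num) (by norm_num) one_le_two⟩ hg₀ hg
  refine ⟨ψ, hlip, R, fun n _ x y h₁ h₂ => (hR n x y h₁ h₂).trans ?_⟩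
  simpa [hψ] using lp.norm_apply_le_norm two_ne_zero (ψ x - ψ y) n

theorem lipschitz_solvent_into_lp {X E : Type*}
    [NormedAddCommGroup X] [NormedSpace ℝ X] [CompleteSpace X]
    [NormedAddCommGroup E] [NormedSpace ℝ E] [CompleteSpace E]
    (hX : 2 ≤ Module.rank ℝ X)
    (hsup : (⨆ φ : X → E, sepRatioBar φ) = ⊤) :
    ∃ ψ : X → lp (fun _ : ℕ => E) 2, LipschitzLarge ψ ∧ Solvent ψ :=
  lipschitz_solvent_into_lp_general hsup
end

section
/- Let X be a separable Banach space and E a Banach space admitting an infinite equilateral set. Then there is a map φ : X → E with R(φ) ≥ 1; in particular the coarse embeddability ratio satisfies CR(X,E) ≥ 1. -/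
open scoped ENNReal NNReal

/-! Since `X` is separable, it splits into countably many pieces of diameter less than `1`.
Sending the `n`-th piece to the `n`-th point of the equilateral set gives a map whose values
are always at distance `0` or `δ`, and at distance exactly `δ` for points at distance at
least `1`; hence `κ(φ) ≥ δ ≥ ω(φ)`. -/

section SeparationRatio

variable {X E : Type*} [NormedAddCommGroup X] [NormedAddCommGroup E] {φ : X → E}

lemma omegaCoef_le_ofReal {c t : ℝ} (ht : 0 < t)
    (h : ∀ x y, ‖x - y‖ ≤ t → ‖φ x - φ y‖ ≤ c) : omegaCoef φ ≤ ENNReal.ofReal c :=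
  iInf₂_le_of_le t ht <| iSup₂_le fun x y => iSup_le fun hxy =>
    (ofReal_norm _).symm.trans_le (ENNReal.ofReal_le_ofReal (h x y hxy))

lemma ofReal_le_kappaCoef {c t : ℝ} (ht : 0 ≤ t)
    (h : ∀ x y, t ≤ ‖x - y‖ → c ≤ ‖φ x - φ y‖) : ENNReal.ofReal c ≤ kappaCoef φ :=
  le_iSup₂_of_le t ht <| le_iInf₂ fun x y => le_iInf fun hxy =>
    (ENNReal.ofReal_le_ofReal (h x y hxy)).trans_eq (ofReal_norm _)

lemma one_le_sepRatio_of_norm_bounds {c s t : ℝ} (hc : 0 < c) (hs : 0 < s) (ht : 0 ≤ t)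
    (hsmall : ∀ x y, ‖x - y‖ ≤ s → ‖φ x - φ y‖ ≤ c)
    (hlarge : ∀ x y, t ≤ ‖x - y‖ → c ≤ ‖φ x - φ y‖) : 1 ≤ sepRatio φ := by
  have hc' : ENNReal.ofReal c ≠ 0 := ENNReal.ofReal_ne_zero_iff.mpr hc
  calc 1 = ENNReal.ofReal c / ENNReal.ofReal c :=
        (ENNReal.div_self hc' ENNReal.ofReal_ne_top).symm
    _ ≤ sepRatio φ :=
      ENNReal.div_le_div (ofReal_le_kappaCoef ht hlarge) (omegaCoef_le_ofReal hs hsmall)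

end SeparationRatio

theorem TopologicalSpace.SeparableSpace.exists_nat_fiber_dist_lt (α : Type*)
    [PseudoMetricSpace α] [SeparableSpace α] [Nonempty α] {ε : ℝ} (hε : 0 < ε) :
    ∃ f : α → ℕ, ∀ x y, f x = f y → dist x y < ε := by
  have hcover : ∀ x, ∃ n, dist x (denseSeq α n) < ε / 2 :=
    fun x => Metric.denseRange_iff.1 (denseRange_denseSeq α) x _ (half_pos hε)
  choose f hf using hcover
  refine ⟨f, fun x y hxy => ?_⟩
  calc dist x y ≤ dist x (denseSeq α (f x)) + dist y (denseSeq α (f x)) :=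
        dist_triangle_right _ _ _
    _ < ε / 2 + ε / 2 := by gcongr <;> [exact hf x; exact hxy ▸ hf y]
    _ = ε := add_halves ε

lemma Set.Infinite.exists_nat_seq_norm_sub_eq {E : Type*} [SeminormedAddGroup E]
    {A : Set E} (hA : A.Infinite) {δ : ℝ} (heq : ∀ x ∈ A, ∀ y ∈ A, x ≠ y → ‖x - y‖ = δ) :
    ∃ g : ℕ → E, ∀ m n, m ≠ n → ‖g m - g n‖ = δ := by
  let g := hA.natEmbedding A
  exact ⟨fun n => g n, fun m n hmn =>
    heq _ (g m).2 _ (g n).2 fun h => hmn (g.injective (Subtype.ext h))⟩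

theorem sepRatio_ge_one_of_equilateral_general {X E : Type*}
    [NormedAddCommGroup X]
    [TopologicalSpace.SeparableSpace X]
    [NormedAddCommGroup E]
    (A : Set E) (hA : A.Infinite) (δ : ℝ) (hδ : 0 < δ)
    (heq : ∀ x ∈ A, ∀ y ∈ A, x ≠ y → ‖x - y‖ = δ) :
    (∃ φ : X → E, 1 ≤ sepRatio φ) ∧ 1 ≤ ⨆ φ : X → E, sepRatio φ := by
  obtain ⟨f, hf⟩ := TopologicalSpace.SeparableSpace.exists_nat_fiber_dist_lt X one_pos
  obtain ⟨g, hg⟩ := hA.exists_nat_seq_norm_sub_eq heq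
  have hsep : 1 ≤ sepRatio (g ∘ f) := by
    refine one_le_sepRatio_of_norm_bounds hδ one_pos zero_le_one
      (fun x y _ => ?_) fun x y hxy => ?_
    · by_cases h : f x = f y
      · simp [h, hδ.le]
      · exact (hg _ _ h).le
    · refine (hg _ _ fun h => ?_).ge
      exact (hf x y h).not_ge (dist_eq_norm x y ▸ hxy)
  exact ⟨⟨g ∘ f, hsep⟩, hsep.trans (le_iSup _ _)⟩

theorem sepRatio_ge_one_of_equilateral {X E : Type*}
    [NormedAddCommGroup X] [NormedSpace ℝ X] [CompleteSpace X]
    [TopologicalSpace.SeparableSpace X]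
    [NormedAddCommGroup E] [NormedSpace ℝ E] [CompleteSpace E]
    (A : Set E) (hA : A.Infinite) (δ : ℝ) (hδ : 0 < δ)
    (heq : ∀ x ∈ A, ∀ y ∈ A, x ≠ y → ‖x - y‖ = δ) :
    (∃ φ : X → E, 1 ≤ sepRatio φ) ∧ 1 ≤ ⨆ φ : X → E, sepRatio φ :=
  sepRatio_ge_one_of_equilateral_general A hA δ hδ heq
end

section
/- Let (e_n) be a normalised basic sequence in a Banach space E and define on the closed linear span of (e_n) the norm |||Σ a_n e_n||| = sup{ ‖Σ_{n∈I} a_n e_n‖ + ‖Σ_{n∈J} a_n e_n‖ : I, J intervals of ℕ with max I < min J }. Then |||·||| is an equivalent norm on the closed span, and |||e_i − e_j||| = 2 for all i < j, so (e_n) is an infinite equilateral set for |||·|||. -/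
open scoped ENNReal NNReal

/-- The triple norm of the paper, evaluated on finitely supported coefficient
sequences: `|||Σ aₙ eₙ||| = sup { ‖Σ_{n∈I} aₙ eₙ‖ + ‖Σ_{n∈J} aₙ eₙ‖ }` over pairs of
intervals `I = [m₁, k₁]`, `J = [m₂, k₂]` of `ℕ` with `max I < min J`. -/
noncomputable def tripleNorm {E : Type*} [NormedAddCommGroup E] [NormedSpace ℝ E]
    (e : ℕ → E) (a : ℕ →₀ ℝ) : ℝ :=
  ⨆ p : {q : (ℕ × ℕ) × ℕ × ℕ // q.1.2 < q.2.1},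
    ‖∑ n ∈ Finset.Icc p.1.1.1 p.1.1.2, a n • e n‖ +
      ‖∑ n ∈ Finset.Icc p.1.2.1 p.1.2.2, a n • e n‖


/-!
The interval projections of a basic sequence are uniformly bounded: `P_{[m,k]} = P_{k+1} - P_m`
has norm at most `2C`, so `|||x||| ≤ 4C ‖x‖`, while the pair of intervals `[0, max supp x]`
and an empty interval to its right shows `‖x‖ ≤ |||x|||`. Conversely, two disjoint blocks of
`Σ aₙ eₙ` have norms adding up to at most `Σ ‖aₙ eₙ‖`; for `eᵢ - eⱼ` this is `2`, and it is
attained by the blocks `{i}` and `{j}`.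
-/

open Finset

section TripleNorm

variable {E : Type*} [NormedAddCommGroup E] [NormedSpace ℝ E] (e : ℕ → E) (a : ℕ →₀ ℝ)

lemma norm_sum_add_norm_sum_le_of_disjoint {s t : Finset ℕ} (hst : Disjoint s t) :
    ‖∑ n ∈ s, a n • e n‖ + ‖∑ n ∈ t, a n • e n‖ ≤ ∑ n ∈ a.support, ‖a n • e n‖ := by
  calc ‖∑ n ∈ s, a n • e n‖ + ‖∑ n ∈ t, a n • e n‖
      ≤ ∑ n ∈ s, ‖a n • e n‖ + ∑ n ∈ t, ‖a n • e n‖ :=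
        add_le_add (norm_sum_le _ _) (norm_sum_le _ _)
    _ = ∑ n ∈ s ∪ t, ‖a n • e n‖ := (sum_union hst).symm
    _ ≤ ∑ n ∈ s ∪ t ∪ a.support, ‖a n • e n‖ :=
        sum_le_sum_of_subset_of_nonneg subset_union_left fun _ _ _ => norm_nonneg _
    _ = ∑ n ∈ a.support, ‖a n • e n‖ :=
        (Finsupp.sum_of_support_subset a subset_union_right (fun n r => ‖r • e n‖)
          fun _ _ => by simp).symm

lemma sum_smul_eq_sum_support_of_subset {s : Finset ℕ} (hs : a.support ⊆ s) :
    ∑ n ∈ s, a n • e n = ∑ n ∈ a.support, a n • e n :=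
  (Finsupp.sum_of_support_subset a hs (fun n r => r • e n) fun _ _ => zero_smul ℝ _).symm

lemma disjoint_Icc_Icc_of_lt {m₁ k₁ m₂ k₂ : ℕ} (h : k₁ < m₂) :
    Disjoint (Icc m₁ k₁) (Icc m₂ k₂) :=
  disjoint_left.2 fun n h₁ h₂ => by
    rw [mem_Icc] at h₁ h₂
    omega

lemma le_tripleNorm {m₁ k₁ m₂ k₂ : ℕ} (h : k₁ < m₂) :
    ‖∑ n ∈ Icc m₁ k₁, a n • e n‖ + ‖∑ n ∈ Icc m₂ k₂, a n • e n‖ ≤ tripleNorm e a :=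
  le_ciSup (f := fun p : {q : (ℕ × ℕ) × ℕ × ℕ // q.1.2 < q.2.1} =>
      ‖∑ n ∈ Icc p.1.1.1 p.1.1.2, a n • e n‖ + ‖∑ n ∈ Icc p.1.2.1 p.1.2.2, a n • e n‖)
    ⟨_, Set.forall_mem_range.2 fun p =>
      norm_sum_add_norm_sum_le_of_disjoint e a (disjoint_Icc_Icc_of_lt p.2)⟩
    ⟨((m₁, k₁), (m₂, k₂)), h⟩

lemma tripleNorm_le {B : ℝ} (h : ∀ m₁ k₁ m₂ k₂ : ℕ, k₁ < m₂ →
      ‖∑ n ∈ Icc m₁ k₁, a n • e n‖ + ‖∑ n ∈ Icc m₂ k₂, a n • e n‖ ≤ B) :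
    tripleNorm e a ≤ B :=
  have : Nonempty {q : (ℕ × ℕ) × ℕ × ℕ // q.1.2 < q.2.1} := ⟨⟨((0, 0), (1, 1)), zero_lt_one⟩⟩
  ciSup_le fun p => h _ _ _ _ p.2

lemma norm_sum_support_le_tripleNorm : ‖∑ n ∈ a.support, a n • e n‖ ≤ tripleNorm e a := by
  set M := a.support.sup id
  have hsupp : a.support ⊆ Icc 0 M := fun n hn => mem_Icc.2 ⟨n.zero_le, le_sup (f := id) hn⟩
  simpa [sum_smul_eq_sum_support_of_subset e a hsupp] using
    le_tripleNorm e a (m₁ := 0) (m₂ := M + 1) (k₂ := M) (Nat.lt_succ_self M)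

section Basic

variable {C : ℝ} (hbasic : ∀ (a : ℕ → ℝ) (m k : ℕ), m ≤ k →
  ‖∑ n ∈ range m, a n • e n‖ ≤ C * ‖∑ n ∈ range k, a n • e n‖)
include hbasic

lemma norm_sum_range_le_of_basic (j : ℕ) :
    ‖∑ n ∈ range j, a n • e n‖ ≤ C * ‖∑ n ∈ a.support, a n • e n‖ := by
  set N := max j (a.support.sup id + 1)
  have hsupp : a.support ⊆ range N := fun n hn =>
    mem_range.2 ((Nat.lt_succ_of_le (le_sup (f := id) hn)).trans_le (le_max_right _ _))
  rw [← sum_smul_eq_sum_support_of_subset e a hsupp]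
  exact hbasic a j N (le_max_left _ _)

lemma norm_sum_Icc_le_of_basic (hC : 0 ≤ C) (m k : ℕ) :
    ‖∑ n ∈ Icc m k, a n • e n‖ ≤ 2 * C * ‖∑ n ∈ a.support, a n • e n‖ := by
  rcases le_or_gt m (k + 1) with hmk | hmk
  · rw [← Ico_add_one_right_eq_Icc, sum_Ico_eq_sub _ hmk]
    linarith [norm_sub_le (∑ n ∈ range (k + 1), a n • e n) (∑ n ∈ range m, a n • e n),
      norm_sum_range_le_of_basic e a hbasic (k + 1), norm_sum_range_le_of_basic e a hbasic m]
  · rw [Icc_eq_empty (by omega), sum_empty, norm_zero]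
    positivity

lemma tripleNorm_le_of_basic (hC : 0 ≤ C) :
    tripleNorm e a ≤ 4 * C * ‖∑ n ∈ a.support, a n • e n‖ :=
  tripleNorm_le e a fun m₁ k₁ m₂ k₂ _ => by
    linarith [norm_sum_Icc_le_of_basic e a hbasic hC m₁ k₁,
      norm_sum_Icc_le_of_basic e a hbasic hC m₂ k₂]

end Basic

lemma tripleNorm_eq_of_support_subset_pair {i j : ℕ} (hij : i < j) (hs : a.support ⊆ {i, j}) :
    tripleNorm e a = ‖a i • e i‖ + ‖a j • e j‖ := by
  refine le_antisymm (tripleNorm_le e a fun m₁ k₁ m₂ k₂ h => ?_) ?_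
  · calc _ ≤ ∑ n ∈ a.support, ‖a n • e n‖ :=
          norm_sum_add_norm_sum_le_of_disjoint e a (disjoint_Icc_Icc_of_lt h)
      _ = ∑ n ∈ {i, j}, ‖a n • e n‖ :=
          Finsupp.sum_of_support_subset a hs (fun n r => ‖r • e n‖) fun _ _ => by simp
      _ = ‖a i • e i‖ + ‖a j • e j‖ := sum_pair hij.ne
  · simpa using le_tripleNorm e a (m₁ := i) (k₁ := i) (m₂ := j) (k₂ := j) hij

end TripleNorm

theorem tripleNorm_equivalent_and_equilateral_general {E : Type*}
    [NormedAddCommGroup E] [NormedSpace ℝ E]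
    (e : ℕ → E) (hnorm : ∀ n, ‖e n‖ = 1)
    (C : ℝ) (hC : 0 < C)
    (hbasic : ∀ (a : ℕ → ℝ) (m k : ℕ), m ≤ k →
      ‖∑ n ∈ Finset.range m, a n • e n‖ ≤ C * ‖∑ n ∈ Finset.range k, a n • e n‖) :
    (∃ c C' : ℝ, 0 < c ∧ 0 < C' ∧ ∀ a : ℕ →₀ ℝ,
      c * ‖∑ n ∈ a.support, a n • e n‖ ≤ tripleNorm e a ∧
        tripleNorm e a ≤ C' * ‖∑ n ∈ a.support, a n • e n‖) ∧
    ∀ i j : ℕ, i < j → tripleNorm e (Finsupp.single i 1 - Finsupp.single j 1) = 2 := by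
  refine ⟨⟨1, 4 * C, one_pos, by positivity, fun a =>
    ⟨(one_mul _).trans_le (norm_sum_support_le_tripleNorm e a),
      tripleNorm_le_of_basic e a hbasic hC.le⟩⟩, fun i j hij => ?_⟩
  have hs : (Finsupp.single i (1 : ℝ) - Finsupp.single j 1).support ⊆ {i, j} := by
    rw [insert_eq]
    exact Finsupp.support_sub.trans
      (union_subset_union Finsupp.support_single_subset Finsupp.support_single_subset)
  rw [tripleNorm_eq_of_support_subset_pair e _ hij hs]
  norm_num [hij.ne, hij.ne', hnorm]

theorem tripleNorm_equivalent_and_equilateral {E : Type*}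
    [NormedAddCommGroup E] [NormedSpace ℝ E] [CompleteSpace E]
    (e : ℕ → E) (hnorm : ∀ n, ‖e n‖ = 1) (hli : LinearIndependent ℝ e)
    (C : ℝ) (hC : 0 < C)
    (hbasic : ∀ (a : ℕ → ℝ) (m k : ℕ), m ≤ k →
      ‖∑ n ∈ Finset.range m, a n • e n‖ ≤ C * ‖∑ n ∈ Finset.range k, a n • e n‖) :
    (∃ c C' : ℝ, 0 < c ∧ 0 < C' ∧ ∀ a : ℕ →₀ ℝ,
      c * ‖∑ n ∈ a.support, a n • e n‖ ≤ tripleNorm e a ∧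
        tripleNorm e a ≤ C' * ‖∑ n ∈ a.support, a n • e n‖) ∧
    ∀ i j : ℕ, i < j → tripleNorm e (Finsupp.single i 1 - Finsupp.single j 1) = 2 :=
  tripleNorm_equivalent_and_equilateral_general e hnorm C hC hbasic
end

section
/- Every infinite-dimensional Banach space admits an equivalent norm with respect to which it contains an infinite equilateral set. -/
/-!
Pick inductively unit vectors `yₙ` and functionals `gₙ` with `‖gₙ‖ ≤ 3`, `gₙ yₙ = 1` and
`gₘ yₙ = 0` for `m ≠ n`. Take `yₙ` in the kernels of `g₀, …, gₙ₋₁` and of finitely many norm-one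
functionals norming `span {y₀, …, yₙ₋₁}` up to a factor `2` (compactness of its unit sphere); this
puts `yₙ` at distance `≥ 1/3` from that span, so Hahn–Banach gives `gₙ`. Then
`N x = max (‖x‖ / 2) (supₙ |gₙ x|)` is an equivalent norm, and `N (yⱼ - yₖ) = 1` for `j ≠ k`.
-/

open scoped ENNReal NNReal

open Set Metric

section

variable {E : Type*} [NormedAddCommGroup E] [NormedSpace ℝ E]

theorem exists_norm_eq_one_forall_eq_zero (hE : ¬ FiniteDimensional ℝ E)
    (H : Finset (StrongDual ℝ E)) : ∃ y : E, ‖y‖ = 1 ∧ ∀ h ∈ H, h y = 0 := by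
  let eval : E →ₗ[ℝ] H → ℝ := LinearMap.pi fun h ↦ (h : StrongDual ℝ E)
  obtain ⟨x, hx, hx0⟩ : ∃ x ∈ LinearMap.ker eval, x ≠ 0 := by
    by_contra! hker
    exact hE (Module.Finite.of_injective eval ((injective_iff_map_eq_zero eval).mpr hker))
  refine ⟨NormedSpace.normalize x, NormedSpace.norm_normalize_eq_one_iff.mpr hx0, fun h hh ↦ ?_⟩
  have : h x = 0 := congrFun hx ⟨h, hh⟩
  simp [NormedSpace.normalize, this]

theorem Submodule.exists_finset_strongDual_norming (F : Submodule ℝ E) [FiniteDimensional ℝ F]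
    {r : ℝ} (hr : r < 1) :
    ∃ s : Finset (StrongDual ℝ E), (∀ φ ∈ s, ‖φ‖ ≤ 1) ∧
      ∀ f ∈ F, f ≠ 0 → ∃ φ ∈ s, r * ‖f‖ < φ f := by
  have hK : IsCompact (((↑) : F → E) '' sphere 0 1) :=
    (isCompact_sphere 0 1).image continuous_subtype_val
  have hcover : ((↑) : F → E) '' sphere 0 1 ⊆
      ⋃ φ ∈ {φ : StrongDual ℝ E | ‖φ‖ ≤ 1}, {v | r < φ v} := by
    rintro _ ⟨u, hu, rfl⟩
    have hu : ‖(u : E)‖ = 1 := by simpa using hu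
    obtain ⟨φ, hφ, hφu⟩ := exists_dual_vector ℝ (u : E) (by simp [hu])
    exact mem_biUnion (x := φ) hφ.le (by simp [hφu, hu, hr])
  obtain ⟨t, hts, htfin, htcover⟩ := hK.elim_finite_subcover_image
    (fun φ _ ↦ isOpen_lt continuous_const φ.continuous) hcover
  refine ⟨htfin.toFinset, fun φ hφ ↦ hts (htfin.mem_toFinset.mp hφ), fun f hf hf0 ↦ ?_⟩
  have hf' : ‖f‖ ≠ 0 := norm_ne_zero_iff.mpr hf0
  have hmem : ‖f‖⁻¹ • f ∈ ((↑) : F → E) '' sphere 0 1 :=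
    ⟨⟨‖f‖⁻¹ • f, F.smul_mem _ hf⟩, by simp [norm_smul, hf'], rfl⟩
  obtain ⟨φ, hφt, hφ⟩ := mem_iUnion₂.mp (htcover hmem)
  refine ⟨φ, htfin.mem_toFinset.mpr hφt, ?_⟩
  have hφ : r < ‖f‖⁻¹ * φ f := by simpa using hφ
  rw [inv_mul_eq_div, lt_div_iff₀ (norm_pos_iff.mpr hf0)] at hφ
  linarith

theorem exists_norm_eq_one_forall_eq_zero_le_norm_sub (hE : ¬ FiniteDimensional ℝ E)
    (F : Submodule ℝ E) [FiniteDimensional ℝ F] (H : Finset (StrongDual ℝ E)) :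
    ∃ y : E, ‖y‖ = 1 ∧ (∀ h ∈ H, h y = 0) ∧ ∀ f ∈ F, 1 / 3 ≤ ‖y - f‖ := by
  classical
  obtain ⟨s, hs1, hsF⟩ := F.exists_finset_strongDual_norming (r := 1 / 2) (by norm_num)
  obtain ⟨y, hy1, hy0⟩ := exists_norm_eq_one_forall_eq_zero hE (H ∪ s)
  refine ⟨y, hy1, fun h hh ↦ hy0 h (Finset.mem_union_left s hh), fun f hf ↦ ?_⟩
  by_cases hfsmall : ‖f‖ ≤ 2 / 3
  · linarith [norm_sub_norm_le y f]
  obtain ⟨φ, hφs, hφf⟩ := hsF f hf (by rintro rfl; simp at hfsmall; linarith)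
  calc 1 / 3 ≤ φ (f - y) := by
        rw [map_sub, hy0 φ (Finset.mem_union_right H hφs)]; linarith
    _ ≤ ‖φ‖ * ‖f - y‖ := (le_abs_self _).trans (φ.le_opNorm _)
    _ ≤ ‖y - f‖ := by
        rw [norm_sub_rev]; exact mul_le_of_le_one_left (norm_nonneg _) (hs1 φ hφs)

theorem Submodule.exists_strongDual_eq_one_of_le_norm_sub (F : Submodule ℝ E) {y : E} {r : ℝ}
    (hr : 0 < r) (hy : ∀ f ∈ F, r ≤ ‖y - f‖) :
    ∃ g : StrongDual ℝ E, ‖g‖ ≤ r⁻¹ ∧ g y = 1 ∧ ∀ f ∈ F, g f = 0 := by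
  set d := ‖F.mkQ y‖
  have hrd : r ≤ d := by
    refine le_of_forall_pos_lt_add fun ε hε ↦ ?_
    obtain ⟨m, hm, hmd⟩ := Submodule.Quotient.norm_mk_lt (F.mkQ y) hε
    have hym : y - m ∈ F := (Submodule.Quotient.eq F).mp hm.symm
    calc r ≤ ‖y - (y - m)‖ := hy _ hym
      _ = ‖m‖ := by rw [sub_sub_cancel]
      _ < d + ε := hmd
  have hd : 0 < d := hr.trans_le hrd
  obtain ⟨φ, hφ, hφy⟩ := exists_dual_vector ℝ (F.mkQ y) hd.ne'
  have hq : ‖F.mkQL‖ ≤ 1 :=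
    ContinuousLinearMap.opNorm_le_bound _ zero_le_one fun x ↦ by
      simpa using Submodule.Quotient.norm_mk_le F x
  refine ⟨d⁻¹ • φ.comp F.mkQL, ?_, ?_, fun f hf ↦ ?_⟩
  · calc ‖d⁻¹ • φ.comp F.mkQL‖ ≤ d⁻¹ * (‖φ‖ * ‖F.mkQL‖) := by
          rw [norm_smul, Real.norm_of_nonneg (inv_nonneg.mpr hd.le)]
          gcongr; exact φ.opNorm_comp_le _
      _ ≤ r⁻¹ := by
          rw [hφ, one_mul]
          calc d⁻¹ * ‖F.mkQL‖ ≤ d⁻¹ * 1 := by gcongr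
            _ ≤ r⁻¹ := by rw [mul_one]; exact inv_anti₀ hr hrd
  · change d⁻¹ * φ (F.mkQ y) = 1
    rw [hφy]
    exact inv_mul_cancel₀ hd.ne'
  · simp [(Submodule.Quotient.mk_eq_zero F).mpr hf]

theorem exists_biorthogonal_seq (hE : ¬ FiniteDimensional ℝ E) :
    ∃ (y : ℕ → E) (g : ℕ → StrongDual ℝ E), (∀ n, ‖y n‖ = 1) ∧ (∀ n, ‖g n‖ ≤ 3) ∧
      (∀ n, g n (y n) = 1) ∧ Pairwise fun m n ↦ g m (y n) = 0 := by
  classical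
  obtain ⟨p, hp, hpp⟩ := exists_seq_of_forall_finset_exists
    (fun p : E × StrongDual ℝ E ↦ ‖p.1‖ = 1 ∧ ‖p.2‖ ≤ 3 ∧ p.2 p.1 = 1)
    (fun p q ↦ p.2 q.1 = 0 ∧ q.2 p.1 = 0) fun s _ ↦ by
      let F := Submodule.span ℝ (s.image Prod.fst : Set E)
      obtain ⟨y, hy1, hy0, hyF⟩ := exists_norm_eq_one_forall_eq_zero_le_norm_sub hE F
        (s.image Prod.snd)
      obtain ⟨g, hg3, hgy, hgF⟩ := F.exists_strongDual_eq_one_of_le_norm_sub (by norm_num) hyF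
      refine ⟨(y, g), ⟨hy1, hg3.trans_eq (by norm_num), hgy⟩, fun q hq ↦
        ⟨hy0 _ (Finset.mem_image_of_mem _ hq), hgF _ (Submodule.subset_span ?_)⟩⟩
      exact Finset.mem_coe.mpr (Finset.mem_image_of_mem _ hq)
  refine ⟨fun n ↦ (p n).1, fun n ↦ (p n).2, fun n ↦ (hp n).1, fun n ↦ (hp n).2.1,
    fun n ↦ (hp n).2.2, fun m n hmn ↦ ?_⟩
  rcases hmn.lt_or_gt with hmn | hnm
  · exact (hpp m n hmn).1
  · exact (hpp n m hnm).2

section NormSup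

variable {ι : Type*}

noncomputable def normSupSeminorm (c : ℝ≥0) (g : ι → StrongDual ℝ E) : Seminorm ℝ E :=
  c • normSeminorm ℝ E ⊔ ⨆ i, (normSeminorm ℝ ℝ).comp (g i : E →ₗ[ℝ] ℝ)

variable {c : ℝ≥0} {g : ι → StrongDual ℝ E} {K : ℝ}

theorem normSupSeminorm_apply (hg : ∀ i, ‖g i‖ ≤ K) (x : E) :
    normSupSeminorm c g x = max (c * ‖x‖) (⨆ i, |g i x|) := by
  have hbdd : BddAbove (range fun i ↦ (normSeminorm ℝ ℝ).comp (g i : E →ₗ[ℝ] ℝ)) :=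
    Seminorm.bddAbove_range_iff.mpr fun x ↦ ⟨K * ‖x‖, forall_mem_range.mpr fun i ↦
      ((g i).le_opNorm x).trans (mul_le_mul_of_nonneg_right (hg i) (norm_nonneg x))⟩
  simp [normSupSeminorm, Seminorm.iSup_apply hbdd, NNReal.smul_def]

theorem normSupSeminorm_le (hg : ∀ i, ‖g i‖ ≤ K) (hcK : c ≤ K) (x : E) :
    normSupSeminorm c g x ≤ K * ‖x‖ := by
  rw [normSupSeminorm_apply hg]
  refine max_le (by gcongr) (Real.iSup_le (fun i ↦ ?_) ?_)
  · exact ((g i).le_opNorm x).trans (by gcongr; exact hg i)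
  · exact mul_nonneg (c.coe_nonneg.trans hcK) (norm_nonneg x)

theorem normSupSeminorm_apply_sub_eq_one (hg : ∀ i, ‖g i‖ ≤ K) (hc : c ≤ 1 / 2)
    {y : ι → E} (hy : ∀ i, ‖y i‖ = 1) (hgy : ∀ i, g i (y i) = 1)
    (hgy₀ : Pairwise fun i j ↦ g i (y j) = 0) {j k : ι} (hjk : j ≠ k) :
    normSupSeminorm c g (y j - y k) = 1 := by
  have hcoord_le : ∀ i, |g i (y j - y k)| ≤ 1 := by
    intro i
    rw [map_sub]
    rcases eq_or_ne i j with rfl | hij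
    · simp [hgy, hgy₀ hjk]
    rcases eq_or_ne i k with rfl | hik
    · simp [hgy, hgy₀ hij]
    · simp [hgy₀ hij, hgy₀ hik]
  have hsup : ⨆ i, |g i (y j - y k)| = 1 := by
    refine le_antisymm (Real.iSup_le hcoord_le zero_le_one) ?_
    refine le_ciSup_of_le ⟨1, forall_mem_range.mpr hcoord_le⟩ j ?_
    simp [hgy, hgy₀ hjk]
  have hnorm : (c : ℝ) * ‖y j - y k‖ ≤ 1 := by
    have : ‖y j - y k‖ ≤ 2 := (norm_sub_le _ _).trans (by rw [hy, hy]; norm_num)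
    have hc' : (c : ℝ) ≤ 1 / 2 := by exact_mod_cast hc
    nlinarith [norm_nonneg (y j - y k), c.coe_nonneg]
  rw [normSupSeminorm_apply hg, hsup, max_eq_right hnorm]

end NormSup

end

theorem renorming_with_equilateral_set_general {E : Type*}
    [NormedAddCommGroup E] [NormedSpace ℝ E]
    (hE : ¬ FiniteDimensional ℝ E) :
    ∃ (N : E → ℝ) (c C : ℝ), 0 < c ∧ 0 < C ∧
      (∀ x : E, c * ‖x‖ ≤ N x ∧ N x ≤ C * ‖x‖) ∧
      (∀ x y : E, N (x + y) ≤ N x + N y) ∧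
      (∀ (r : ℝ) (x : E), N (r • x) = |r| * N x) ∧
      ∃ (A : Set E) (δ : ℝ), A.Infinite ∧ 0 < δ ∧
        ∀ x ∈ A, ∀ y ∈ A, x ≠ y → N (x - y) = δ := by
  obtain ⟨y, g, hy, hg, hgy, hgy₀⟩ := exists_biorthogonal_seq hE
  let N := normSupSeminorm (1 / 2) g
  have hy_inj : Function.Injective y := fun j k hjk ↦ by
    by_contra hne
    simpa [hjk, hgy₀ hne] using hgy j
  refine ⟨N, 1 / 2, 3, by norm_num, by norm_num, fun x ↦ ⟨?_, ?_⟩, map_add_le_add N,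
    fun r x ↦ by simpa using map_smul_eq_mul N r x, range y, 1,
    infinite_range_of_injective hy_inj, one_pos, ?_⟩
  · rw [normSupSeminorm_apply hg]
    exact le_of_eq_of_le (by norm_num) (le_max_left _ _)
  · exact normSupSeminorm_le hg (by norm_num) x
  · rintro _ ⟨j, rfl⟩ _ ⟨k, rfl⟩ hne
    exact normSupSeminorm_apply_sub_eq_one hg (by norm_num) hy hgy hgy₀ (ne_of_apply_ne y hne)

theorem renorming_with_equilateral_set {E : Type*}
    [NormedAddCommGroup E] [NormedSpace ℝ E] [CompleteSpace E]
    (hE : ¬ FiniteDimensional ℝ E) :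
    ∃ (N : E → ℝ) (c C : ℝ), 0 < c ∧ 0 < C ∧
      (∀ x : E, c * ‖x‖ ≤ N x ∧ N x ≤ C * ‖x‖) ∧
      (∀ x y : E, N (x + y) ≤ N x + N y) ∧
      (∀ (r : ℝ) (x : E), N (r • x) = |r| * N x) ∧
      ∃ (A : Set E) (δ : ℝ), A.Infinite ∧ 0 < δ ∧
        ∀ x ∈ A, ∀ y ∈ A, x ≠ y → N (x - y) = δ :=
  renorming_with_equilateral_set_general hE
end

section
/- If X, Y, Z are Banach spaces with CR(X,Y) = ∞ and Y ⊕ Y embeds isomorphically into Y (and dim X, dim Y ≥ 2), then CR(X,Z) ≥ CR(Y,Z). -/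
open scoped ENNReal NNReal

noncomputable section

/-!
Fix `ψ : Y → Z` with `κ(ψ) > a` and `ω(ψ) < b`: for some `t` and `s > 0`, `ψ` sends pairs at
distance `≥ t` to distance `≥ a` and pairs at distance `≤ s` to distance `≤ b`. As `CR(X, Y) = ∞`,
some `φ : X → Y` sends pairs at distance `≥ t'` to distance `≥ K` and pairs at distance `≤ δ` to
distance `≤ B`, with `K / B ≥ t / s`. Rescaled by `s / B`, `φ` sends `δ`-close pairs to `s`-close
pairs and `t'`-far pairs to `t`-far pairs, so `κ(ψ ∘ (s / B) • φ) ≥ a` and `ω(ψ ∘ (s / B) • φ) ≤ b`.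
-/

namespace ENNReal

theorem exists_coe_lt_lt_coe_div_eq {x y : ℝ≥0∞} {r : ℝ≥0} (hr : r ≠ 0) (h : (r : ℝ≥0∞) < x / y) :
    ∃ a b : ℝ≥0, 0 < b ∧ (a : ℝ≥0∞) < x ∧ y < b ∧ r = a / b := by
  have hry : (r : ℝ≥0∞) * y < x :=
    (ENNReal.lt_div_iff_mul_lt (Or.inr coe_ne_top) (Or.inr (coe_ne_zero.mpr hr))).mp h
  obtain ⟨a, hra, hax⟩ := lt_iff_exists_nnreal_btwn.mp hry
  have ha : 0 < a := coe_pos.mp (pos_of_gt hra)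
  refine ⟨a, a / r, div_pos ha (pos_of_ne_zero hr), hax, ?_, (div_div_cancel₀ ha.ne').symm⟩
  rwa [coe_div hr, ENNReal.lt_div_iff_mul_lt (Or.inl (coe_ne_zero.mpr hr)) (Or.inl coe_ne_top),
    mul_comm]

theorem div_le_of_forall_coe_lt_lt_coe {x y M : ℝ≥0∞}
    (h : ∀ a b : ℝ≥0, (a : ℝ≥0∞) < x → y < b → (a : ℝ≥0∞) / b ≤ M) : x / y ≤ M := by
  refine le_of_forall_nnreal_lt fun r hr => ?_
  rcases eq_or_ne r 0 with rfl | hr0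
  · simp
  obtain ⟨a, b, hb, hax, hyb, rfl⟩ := exists_coe_lt_lt_coe_div_eq hr0 hr
  rw [coe_div hb.ne']
  exact h a b hax hyb

end ENNReal

section Coefficients

variable {X E : Type*} [NormedAddCommGroup X] [NormedAddCommGroup E] {φ : X → E}

theorem exists_le_norm_sub_of_lt_kappaCoef {a : ℝ≥0} (h : (a : ℝ≥0∞) < kappaCoef φ) :
    ∃ t > 0, ∀ x y, t ≤ ‖x - y‖ → (a : ℝ) ≤ ‖φ x - φ y‖ := by
  obtain ⟨t, hat⟩ := lt_iSup_iff.mp h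
  obtain ⟨ht, hat⟩ := lt_iSup_iff.mp hat
  refine ⟨t + 1, by positivity, fun x y hxy => ?_⟩
  have : (a : ℝ≥0∞) < ‖φ x - φ y‖₊ := hat.trans_le (iInf₂_le_of_le x y (iInf_le _ (by linarith)))
  exact_mod_cast this.le

theorem exists_norm_sub_le_of_omegaCoef_lt {b : ℝ≥0} (h : omegaCoef φ < b) :
    ∃ s > 0, ∀ x y, ‖x - y‖ ≤ s → ‖φ x - φ y‖ ≤ b := by
  obtain ⟨s, hsb⟩ := iInf_lt_iff.mp h
  obtain ⟨hs, hsb⟩ := iInf_lt_iff.mp hsb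
  refine ⟨s, hs, fun x y hxy => ?_⟩
  have : (‖φ x - φ y‖₊ : ℝ≥0∞) < b :=
    (le_iSup₂_of_le x y (le_iSup_of_le (f := fun _ => _) hxy le_rfl)).trans_lt hsb
  exact_mod_cast this.le

theorem le_kappaCoef_of_forall {a : ℝ≥0} {t : ℝ} (ht : 0 ≤ t)
    (h : ∀ x y, t ≤ ‖x - y‖ → (a : ℝ) ≤ ‖φ x - φ y‖) : (a : ℝ≥0∞) ≤ kappaCoef φ :=
  le_iSup₂_of_le t ht <| le_iInf₂ fun x y => le_iInf fun hxy => by exact_mod_cast h x y hxy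

theorem omegaCoef_le_of_forall {b : ℝ≥0} {s : ℝ} (hs : 0 < s)
    (h : ∀ x y, ‖x - y‖ ≤ s → ‖φ x - φ y‖ ≤ b) : omegaCoef φ ≤ b :=
  iInf₂_le_of_le s hs <| iSup₂_le fun x y => iSup_le fun hxy => by exact_mod_cast h x y hxy

end Coefficients

theorem coe_div_le_iSup_sepRatio_of_iSup_sepRatio_eq_top {X Y Z : Type*} [NormedAddCommGroup X]
    [NormedAddCommGroup Y] [NormedSpace ℝ Y] [NormedAddCommGroup Z]
    (hXY : (⨆ φ : X → Y, sepRatio φ) = ⊤) {ψ : Y → Z} {a b : ℝ≥0}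
    (ha : (a : ℝ≥0∞) < kappaCoef ψ) (hb : omegaCoef ψ < b) :
    (a : ℝ≥0∞) / b ≤ ⨆ φ : X → Z, sepRatio φ := by
  obtain ⟨t, ht, hψ_far⟩ := exists_le_norm_sub_of_lt_kappaCoef ha
  obtain ⟨s, hs, hψ_near⟩ := exists_norm_sub_le_of_omegaCoef_lt hb
  have hts : Real.toNNReal (t / s) ≠ 0 := (Real.toNNReal_pos.mpr (div_pos ht hs)).ne'
  have hφ_exists : (Real.toNNReal (t / s) : ℝ≥0∞) < ⨆ φ : X → Y, sepRatio φ :=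
    hXY ▸ ENNReal.coe_lt_top
  obtain ⟨φ, hφ⟩ := lt_iSup_iff.mp hφ_exists
  obtain ⟨K, B, hB, hφK, hφB, hKB⟩ := ENNReal.exists_coe_lt_lt_coe_div_eq hts hφ
  obtain ⟨t', ht', hφ_far⟩ := exists_le_norm_sub_of_lt_kappaCoef hφK
  obtain ⟨δ, hδ, hφ_near⟩ := exists_norm_sub_le_of_omegaCoef_lt hφB
  have hB₀ : (0 : ℝ) < B := hB
  have htsKB : t / s = K / B := by
    rw [← NNReal.coe_div, ← hKB, Real.coe_toNNReal _ (by positivity)]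
  set c := s / B
  have hscale : ∀ x y, ‖c • φ x - c • φ y‖ = c * ‖φ x - φ y‖ := fun x y => by
    rw [← smul_sub, norm_smul, Real.norm_of_nonneg (by positivity)]
  have hfar : ∀ x y, t' ≤ ‖x - y‖ → (a : ℝ) ≤ ‖ψ (c • φ x) - ψ (c • φ y)‖ := fun x y hxy => by
    refine hψ_far _ _ ?_
    rw [hscale]
    calc t = c * K := by rw [div_mul_comm, ← htsKB, div_mul_cancel₀ t hs.ne']
      _ ≤ c * ‖φ x - φ y‖ := by gcongr; exact hφ_far x y hxy
  have hnear : ∀ x y, ‖x - y‖ ≤ δ → ‖ψ (c • φ x) - ψ (c • φ y)‖ ≤ b := fun x y hxy => by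
    refine hψ_near _ _ ?_
    calc ‖c • φ x - c • φ y‖ = c * ‖φ x - φ y‖ := hscale x y
      _ ≤ c * B := by gcongr; exact hφ_near x y hxy
      _ = s := div_mul_cancel₀ s hB₀.ne'
  calc (a : ℝ≥0∞) / b ≤ sepRatio fun x => ψ (c • φ x) :=
        ENNReal.div_le_div (le_kappaCoef_of_forall ht'.le hfar) (omegaCoef_le_of_forall hδ hnear)
    _ ≤ ⨆ φ : X → Z, sepRatio φ := le_iSup (fun φ : X → Z => sepRatio φ) _

theorem coarse_ratio_transitive_general {X Y Z : Type*}
    [NormedAddCommGroup X]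
    [NormedAddCommGroup Y] [NormedSpace ℝ Y]
    [NormedAddCommGroup Z]
    (hXY : (⨆ φ : X → Y, sepRatio φ) = ⊤) :
    (⨆ φ : Y → Z, sepRatio φ) ≤ ⨆ φ : X → Z, sepRatio φ :=
  iSup_le fun _ => ENNReal.div_le_of_forall_coe_lt_lt_coe fun _ _ ha hb =>
    coe_div_le_iSup_sepRatio_of_iSup_sepRatio_eq_top hXY ha hb

theorem coarse_ratio_transitive {X Y Z : Type*}
    [NormedAddCommGroup X] [NormedSpace ℝ X] [CompleteSpace X]
    [NormedAddCommGroup Y] [NormedSpace ℝ Y] [CompleteSpace Y]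
    [NormedAddCommGroup Z] [NormedSpace ℝ Z] [CompleteSpace Z]
    (hX : 2 ≤ Module.rank ℝ X) (hY : 2 ≤ Module.rank ℝ Y)
    (hXY : (⨆ φ : X → Y, sepRatio φ) = ⊤)
    (hYY : ∃ (J : (Y × Y) →L[ℝ] Y) (c : ℝ), 0 < c ∧ ∀ v : Y × Y, c * ‖v‖ ≤ ‖J v‖) :
    (⨆ φ : Y → Z, sepRatio φ) ≤ ⨆ φ : X → Z, sepRatio φ :=
  coarse_ratio_transitive_general hXY
end
end

section
/- Let ψ_n : X → E be maps with ψ_n(0) = 0 such that ‖x−y‖ ≤ n implies ‖ψ_n(x)−ψ_n(y)‖ ≤ 2^{−n} for all n ≥ 1. Then the map ψ(x) = Σ_{n=1}^∞ ψ_n(x) is well-defined (the series converges absolutely) and for every natural number m ≥ 1 and all x, y ∈ X with ‖x−y‖ ≤ m one has ‖ψ(x)−ψ(y)‖ < m + 2^{−m+1}; in particular ψ is Lipschitz for large distances. -/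
open scoped ENNReal NNReal

/-!
Chaining along the segment from `x` to `y` in unit steps turns the hypothesis on `ψ_n` into
`‖ψ_n x - ψ_n y‖ ≤ m 2^{-n}` whenever `‖x - y‖ ≤ m`. Use this for the first `m` terms of the
series and the hypothesis itself for the terms with `n > m`: the difference of the sums is at most
`m (1 - 2^{-m}) + 2^{-m}`. With `m = ⌈‖x - y‖⌉` this also gives summability (take `y = 0`) and the
large-scale Lipschitz bound.
-/

section Chain

variable {X Y : Type*} [NormedAddCommGroup X] [NormedSpace ℝ X] [PseudoMetricSpace Y]

theorem dist_le_natCast_mul_of_dist_le_one {f : X → Y} {ε : ℝ}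
    (hf : ∀ x y, dist x y ≤ 1 → dist (f x) (f y) ≤ ε) (m : ℕ) {x y : X}
    (hxy : dist x y ≤ m) : dist (f x) (f y) ≤ m * ε := by
  induction m generalizing x with
  | zero =>
    obtain rfl : x = y := dist_le_zero.1 (by simpa using hxy)
    simp
  | succ m ih =>
    set z := AffineMap.lineMap x y ((m : ℝ) + 1)⁻¹
    have hm : (0 : ℝ) < m + 1 := by positivity
    have hxz : dist x z ≤ 1 := by
      rw [dist_left_lineMap, Real.norm_of_nonneg (by positivity), inv_mul_le_iff₀ hm]
      simpa using hxy
    have hzy : dist z y ≤ m := by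
      have : 1 - ((m : ℝ) + 1)⁻¹ = m * ((m : ℝ) + 1)⁻¹ := by field_simp; ring
      rw [dist_lineMap_right, this, Real.norm_of_nonneg (by positivity), mul_assoc]
      refine mul_le_of_le_one_right m.cast_nonneg ?_
      rw [inv_mul_le_iff₀ hm]
      simpa using hxy
    calc dist (f x) (f y) ≤ dist (f x) (f z) + dist (f z) (f y) := dist_triangle _ _ _
      _ ≤ ε + m * ε := add_le_add (hf x z hxz) (ih hzy)
      _ = (m + 1 : ℕ) * ε := by push_cast; ring

end Chain

theorem tsum_le_natCast_add_half_pow {a : ℕ → ℝ} (ha : Summable a) (m : ℕ)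
    (head : ∀ n < m, a n ≤ m * (1 / 2) ^ (n + 1)) (tail : ∀ n, m ≤ n → a n ≤ (1 / 2) ^ (n + 1)) :
    ∑' n, a n ≤ m + (1 / 2) ^ m := by
  rw [← ha.sum_add_tsum_nat_add m]
  have hhead : ∑ n ∈ Finset.range m, a n ≤ m := calc
    ∑ n ∈ Finset.range m, a n ≤ ∑ n ∈ Finset.range m, m * (1 / 2 : ℝ) ^ (n + 1) :=
      Finset.sum_le_sum fun n hn => head n (Finset.mem_range.1 hn)
    _ = m / 2 * ∑ n ∈ Finset.range m, (1 / 2 : ℝ) ^ n := by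
      rw [Finset.mul_sum]; congr 1 with n; ring
    _ ≤ m / 2 * 2 := by gcongr; exact sum_geometric_two_le m
    _ = m := by ring
  have htail : ∑' n, a (n + m) ≤ (1 / 2) ^ m := calc
    ∑' n, a (n + m) ≤ ∑' n, (1 / 2 : ℝ) ^ (m + 1) * (1 / 2) ^ n :=
      (ha.comp_injective (add_left_injective m)).tsum_le_tsum
        (fun n => (tail (n + m) (by omega)).trans_eq (by ring))
        (summable_geometric_two.mul_left _)
    _ = (1 / 2) ^ m := by rw [tsum_mul_left, tsum_geometric_two]; ring
  linarith

section Series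

variable {X E : Type*} [NormedAddCommGroup X] [NormedSpace ℝ X] [NormedAddCommGroup E]
  {φ : ℕ → X → E}

theorem norm_sub_le_natCast_mul_half_pow
    (hφ : ∀ (n : ℕ) x y, ‖x - y‖ ≤ n + 1 → ‖φ n x - φ n y‖ ≤ (1 / 2) ^ (n + 1))
    (m n : ℕ) {x y : X} (hxy : ‖x - y‖ ≤ m) : ‖φ n x - φ n y‖ ≤ m * (1 / 2) ^ (n + 1) := by
  simp only [← dist_eq_norm] at hφ hxy ⊢
  refine dist_le_natCast_mul_of_dist_le_one (fun x y h => hφ n x y ?_) m hxy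
  linarith [n.cast_nonneg (α := ℝ)]

theorem summable_norm_sub_of_norm_sub_le
    (hφ : ∀ (n : ℕ) x y, ‖x - y‖ ≤ n + 1 → ‖φ n x - φ n y‖ ≤ (1 / 2) ^ (n + 1)) (x y : X) :
    Summable fun n => ‖φ n x - φ n y‖ :=
  .of_nonneg_of_le (fun _ => norm_nonneg _)
    (fun n => norm_sub_le_natCast_mul_half_pow hφ _ n (Nat.le_ceil _))
    ((summable_geometric_two.mul_left (1 / 2)).mul_left _ |>.congr fun n => by ring)

theorem norm_tsum_sub_tsum_le
    (hφ : ∀ (n : ℕ) x y, ‖x - y‖ ≤ n + 1 → ‖φ n x - φ n y‖ ≤ (1 / 2) ^ (n + 1))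
    {x y : X} (hx : Summable fun n => φ n x) (hy : Summable fun n => φ n y)
    (m : ℕ) (hxy : ‖x - y‖ ≤ m) :
    ‖∑' n, φ n x - ∑' n, φ n y‖ ≤ m + (1 / 2) ^ m := by
  rw [← hx.tsum_sub hy]
  refine (norm_tsum_le_tsum_norm (summable_norm_sub_of_norm_sub_le hφ x y)).trans ?_
  refine tsum_le_natCast_add_half_pow (summable_norm_sub_of_norm_sub_le hφ x y) m
    (fun n _ => norm_sub_le_natCast_mul_half_pow hφ m n hxy) fun n hn => hφ n x y ?_
  exact hxy.trans (by exact_mod_cast hn.trans n.le_succ)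

end Series

theorem sum_map_lipschitz_large_general {X E : Type*}
    [NormedAddCommGroup X] [NormedSpace ℝ X]
    [NormedAddCommGroup E] [CompleteSpace E]
    (ψ : ℕ → X → E) (hψ0 : ∀ n, ψ n 0 = 0)
    (hlip : ∀ n : ℕ, 1 ≤ n → ∀ x y : X, ‖x - y‖ ≤ (n : ℝ) →
      ‖ψ n x - ψ n y‖ ≤ (1 / 2 : ℝ) ^ n) :
    (∀ x : X, Summable fun n : ℕ => ‖ψ (n + 1) x‖) ∧
    (∀ m : ℕ, 1 ≤ m → ∀ x y : X, ‖x - y‖ ≤ (m : ℝ) →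
      ‖(∑' n : ℕ, ψ (n + 1) x) - ∑' n : ℕ, ψ (n + 1) y‖ < (m : ℝ) + 2 * (1 / 2 : ℝ) ^ m) ∧
    LipschitzLarge (fun x : X => ∑' n : ℕ, ψ (n + 1) x) := by
  have hφ : ∀ (n : ℕ) (x y : X), ‖x - y‖ ≤ n + 1 →
      ‖ψ (n + 1) x - ψ (n + 1) y‖ ≤ (1 / 2) ^ (n + 1) :=
    fun n x y h => hlip (n + 1) n.succ_pos x y (by exact_mod_cast h)
  have hsum (x : X) : Summable fun n => ‖ψ (n + 1) x‖ := by
    simpa [hψ0] using summable_norm_sub_of_norm_sub_le (φ := fun n => ψ (n + 1)) hφ x 0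
  have hbound (m : ℕ) (x y : X) (hxy : ‖x - y‖ ≤ m) :
      ‖∑' n, ψ (n + 1) x - ∑' n, ψ (n + 1) y‖ ≤ m + (1 / 2) ^ m :=
    norm_tsum_sub_tsum_le (φ := fun n => ψ (n + 1)) hφ (hsum x).of_norm (hsum y).of_norm m hxy
  refine ⟨hsum, fun m _ x y hxy => (hbound m x y hxy).trans_lt ?_, 2, fun x y => ?_⟩
  · linarith [pow_pos (one_half_pos (α := ℝ)) m]
  · have hm : (⌈‖x - y‖⌉₊ : ℝ) < ‖x - y‖ + 1 := Nat.ceil_lt_add_one (norm_nonneg _)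
    have hpow : (1 / 2 : ℝ) ^ ⌈‖x - y‖⌉₊ ≤ 1 := pow_le_one₀ (by norm_num) (by norm_num)
    linarith [hbound _ x y (Nat.le_ceil _), norm_nonneg (x - y)]

theorem sum_map_lipschitz_large {X E : Type*}
    [NormedAddCommGroup X] [NormedSpace ℝ X] [CompleteSpace X]
    [NormedAddCommGroup E] [NormedSpace ℝ E] [CompleteSpace E]
    (hX : 2 ≤ Module.rank ℝ X)
    (ψ : ℕ → X → E) (hψ0 : ∀ n, ψ n 0 = 0)
    (hlip : ∀ n : ℕ, 1 ≤ n → ∀ x y : X, ‖x - y‖ ≤ (n : ℝ) →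
      ‖ψ n x - ψ n y‖ ≤ (1 / 2 : ℝ) ^ n) :
    (∀ x : X, Summable fun n : ℕ => ‖ψ (n + 1) x‖) ∧
    (∀ m : ℕ, 1 ≤ m → ∀ x y : X, ‖x - y‖ ≤ (m : ℝ) →
      ‖(∑' n : ℕ, ψ (n + 1) x) - ∑' n : ℕ, ψ (n + 1) y‖ < (m : ℝ) + 2 * (1 / 2 : ℝ) ^ m) ∧
    LipschitzLarge (fun x : X => ∑' n : ℕ, ψ (n + 1) x) :=
  sum_map_lipschitz_large_general ψ hψ0 hlip
end
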